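/- arXiv:2401.07968 — 2 statements merged into one kernel-verified Lean document; each statement's English description precedes it below -/
import Mathlib

section
/- Empirical-to-population norm concentration (bounded case): Suppose ‖f‖_∞ ≤ B_F for all f ∈ F, and suppose f, g ∈ F satisfy n‖f − g‖²_{L2(P_X)} ≥ C²δ² for some sufficiently large C > 0, and n‖f − f̄‖²_{L2(P_X)} < δ². Then, with probability at least 1 − exp(−3δ²/(64 B_F²)) − exp(−3δ²/(16 B_F² (3C² + 1))), both n‖f − f̄‖²_{L2(P_n)} ≤ 2δ² and n‖f − g‖²_{L2(P_n)} ≥ (C² − 1)δ² hold simultaneously. -/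
/-!
Both empirical squared distances are sums of `n` i.i.d. variables with values in `[0, 4B²]`.
For `Z ∈ [0, M]`, convexity of `exp` gives `𝔼 e^{tZ} ≤ exp ((e^{tM} - 1) 𝔼Z / M)`, so Chernoff's
bound controls both tails of such a sum multiplicatively in its mean: the tilt `t = log 2 / M`
bounds the upper tail of `n‖f − f̄‖²_{L2(P_n)}`, and the tilt `t = -η / (κ M)` the lower tail of
`n‖f − g‖²_{L2(P_n)}`. A union bound over the two bad events finishes the proof.
-/

open MeasureTheory ProbabilityTheory ENNReal

noncomputable section

/-- The `L2(P_X)` distance between two functions. -/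
def dist2 {X : Type*} [MeasurableSpace X] (μ : Measure X) (f g : X → ℝ) : ℝ :=
  Real.sqrt (∫ x, (f x - g x) ^ 2 ∂μ)

/-- Largest cardinality of an `r`-packing of `S` in the `L2(μ)` norm. -/
def packNum {X : Type*} [MeasurableSpace X] (μ : Measure X) (r : ℝ)
    (S : Set (X → ℝ)) : ℝ≥0∞ :=
  ⨆ (T : Finset (X → ℝ)) (_ : ↑T ⊆ S ∧
      ∀ f ∈ T, ∀ g ∈ T, f ≠ g → r < dist2 μ f g), (T.card : ℝ≥0∞)

/-- Local packing number `M^loc_F(ε, c)`. -/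
def Mloc {X : Type*} [MeasurableSpace X] (μ : Measure X) (F : Set (X → ℝ))
    (ε c : ℝ) : ℝ≥0∞ :=
  ⨆ f ∈ F, packNum μ (ε / c) ({g | dist2 μ f g ≤ ε} ∩ F)

/-- Joint law of the data `((X_1,…,X_n),(Y_1,…,Y_n))` where the `X_i` are i.i.d. `μ` and
`Y_i = f(X_i) + ξ_i` with `ξ_i` i.i.d. `N(0,σ²)` independent of the `X_i`. -/
def jointLaw {X : Type*} [MeasurableSpace X] (μ : Measure X) [IsProbabilityMeasure μ]
    (σ : ℝ) (n : ℕ) (f : X → ℝ) : Measure ((Fin n → X) × (Fin n → ℝ)) :=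
  ((Measure.pi fun _ : Fin n => μ).prod
      (Measure.pi fun _ : Fin n => gaussianReal 0 ⟨σ ^ 2, sq_nonneg σ⟩)).map
    fun p => (p.1, fun i => f (p.1 i) + p.2 i)

/-- Minimax risk over `F` for the squared `L2(μ)` loss. -/
def minimaxRisk {X : Type*} [MeasurableSpace X] (μ : Measure X) [IsProbabilityMeasure μ]
    (σ : ℝ) (n : ℕ) (F : Set (X → ℝ)) : ℝ≥0∞ :=
  ⨅ (fhat : (Fin n → X) × (Fin n → ℝ) → X → ℝ)
    (_ : Measurable fhat ∧ ∀ dat, fhat dat ∈ F),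
    ⨆ f ∈ F, ∫⁻ dat, ENNReal.ofReal ((dist2 μ (fhat dat) f) ^ 2) ∂(jointLaw μ σ n f)


/-- Empirical `L2(P_n)` distance between two functions, given design points `x`. -/
def empDist2 {X : Type*} {n : ℕ} (x : Fin n → X) (f g : X → ℝ) : ℝ :=
  Real.sqrt ((1 / (n : ℝ)) * ∑ i, (f (x i) - g (x i)) ^ 2)

open Real Set

lemma exp_neg_le_one_sub_add_sq_div_two {s : ℝ} (hs : 0 ≤ s) : exp (-s) ≤ 1 - s + s ^ 2 / 2 := by
  rw [exp_neg, inv_le_iff_one_le_mul₀ (exp_pos s)]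
  -- `(1 + s + s²/2)(1 - s + s²/2) = 1 + s⁴/4`
  calc 1 ≤ (1 - s + s ^ 2 / 2) * (1 + s + s ^ 2 / 2) := by nlinarith [pow_nonneg hs 4]
    _ ≤ (1 - s + s ^ 2 / 2) * exp s :=
        mul_le_mul_of_nonneg_left (quadratic_le_exp_of_nonneg hs) (by nlinarith)

lemma exp_mul_le_of_mem_Icc {M z : ℝ} (hM : 0 < M) (hz : z ∈ Icc 0 M) (t : ℝ) :
    exp (t * z) ≤ 1 + (exp (t * M) - 1) * z / M := by
  have hθ0 : 0 ≤ z / M := div_nonneg hz.1 hM.le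
  have hθ1 : z / M ≤ 1 := (div_le_one hM).2 hz.2
  have h := convexOn_exp.2 (mem_univ 0) (mem_univ (t * M)) (sub_nonneg.2 hθ1) hθ0
    (sub_add_cancel 1 _)
  calc exp (t * z) = exp (z / M * (t * M)) := by field_simp
    _ ≤ (1 - z / M) * 1 + z / M * exp (t * M) := by simpa using h
    _ = 1 + (exp (t * M) - 1) * z / M := by field_simp; ring

section Chernoff

variable {Ω : Type*} [MeasurableSpace Ω] {μ : Measure Ω} {Z : Ω → ℝ} {M : ℝ}

lemma integrable_exp_mul_of_mem_Icc [IsFiniteMeasure μ] (hZ : AEMeasurable Z μ)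
    (hZM : ∀ᵐ x ∂μ, Z x ∈ Icc 0 M) (t : ℝ) : Integrable (fun x => exp (t * Z x)) μ := by
  refine .of_bound (by fun_prop) (exp (|t| * M)) ?_
  filter_upwards [hZM] with x hx
  rw [norm_of_nonneg (exp_pos _).le, exp_le_exp]
  calc t * Z x ≤ |t| * Z x := mul_le_mul_of_nonneg_right (le_abs_self t) hx.1
    _ ≤ |t| * M := mul_le_mul_of_nonneg_left hx.2 (abs_nonneg t)

lemma mgf_le_exp_of_mem_Icc [IsProbabilityMeasure μ] (hM : 0 < M) (hZ : AEMeasurable Z μ)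
    (hZM : ∀ᵐ x ∂μ, Z x ∈ Icc 0 M) (t : ℝ) :
    mgf Z μ t ≤ exp ((exp (t * M) - 1) * μ[Z] / M) := by
  have hZint : Integrable Z μ := .of_bound hZ.aestronglyMeasurable M <| by
    filter_upwards [hZM] with x hx
    rw [norm_of_nonneg hx.1]
    exact hx.2
  calc mgf Z μ t ≤ ∫ x, (1 + (exp (t * M) - 1) * Z x / M) ∂μ := by
        refine integral_mono_ae (integrable_exp_mul_of_mem_Icc hZ hZM t)
          ((integrable_const 1).add ((hZint.const_mul _).div_const M)) ?_
        filter_upwards [hZM] with x hx using exp_mul_le_of_mem_Icc hM hx t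
    _ = (exp (t * M) - 1) * μ[Z] / M + 1 := by
        rw [integral_add (integrable_const 1) ((hZint.const_mul _).div_const M),
          integral_div, integral_const_mul]
        simp [add_comm]
    _ ≤ exp ((exp (t * M) - 1) * μ[Z] / M) := add_one_le_exp _

variable {ι : Type*} [Fintype ι]

lemma mgf_sum_pi [SigmaFinite μ] (t : ℝ) :
    mgf (fun x : ι → Ω => ∑ i, Z (x i)) (Measure.pi fun _ => μ) t
      = mgf Z μ t ^ Fintype.card ι := by
  simp only [mgf, Finset.mul_sum, exp_sum]
  exact integral_fintype_prod_eq_pow fun y => exp (t * Z y)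

variable [IsProbabilityMeasure μ]

lemma integrable_exp_mul_sum_pi (hZ : AEMeasurable Z μ) (hZM : ∀ᵐ x ∂μ, Z x ∈ Icc 0 M)
    (t : ℝ) :
    Integrable (fun x : ι → Ω => exp (t * ∑ i, Z (x i))) (Measure.pi fun _ => μ) := by
  simp only [Finset.mul_sum, exp_sum]
  exact .fintype_prod fun _ => integrable_exp_mul_of_mem_Icc hZ hZM t

lemma mgf_sum_pi_le (hM : 0 < M) (hZ : AEMeasurable Z μ) (hZM : ∀ᵐ x ∂μ, Z x ∈ Icc 0 M)
    (t : ℝ) :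
    mgf (fun x : ι → Ω => ∑ i, Z (x i)) (Measure.pi fun _ => μ) t
      ≤ exp (Fintype.card ι * ((exp (t * M) - 1) * μ[Z] / M)) := by
  rw [mgf_sum_pi, exp_nat_mul]
  exact pow_le_pow_left₀ mgf_nonneg (mgf_le_exp_of_mem_Icc hM hZ hZM t) _

lemma measureReal_pi_le_sum_le (hM : 0 < M) (hZ : AEMeasurable Z μ)
    (hZM : ∀ᵐ x ∂μ, Z x ∈ Icc 0 M) {t : ℝ} (ht : 0 ≤ t) (a : ℝ) :
    (Measure.pi fun _ : ι => μ).real {x | a ≤ ∑ i, Z (x i)}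
      ≤ exp (-t * a + Fintype.card ι * ((exp (t * M) - 1) * μ[Z] / M)) := by
  rw [exp_add]
  exact (measure_ge_le_exp_mul_mgf a ht (integrable_exp_mul_sum_pi hZ hZM t)).trans
    (mul_le_mul_of_nonneg_left (mgf_sum_pi_le hM hZ hZM t) (exp_pos _).le)

lemma measureReal_pi_sum_le_le (hM : 0 < M) (hZ : AEMeasurable Z μ)
    (hZM : ∀ᵐ x ∂μ, Z x ∈ Icc 0 M) {t : ℝ} (ht : t ≤ 0) (a : ℝ) :
    (Measure.pi fun _ : ι => μ).real {x | ∑ i, Z (x i) ≤ a}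
      ≤ exp (-t * a + Fintype.card ι * ((exp (t * M) - 1) * μ[Z] / M)) := by
  rw [exp_add]
  exact (measure_le_le_exp_mul_mgf a ht (integrable_exp_mul_sum_pi hZ hZM t)).trans
    (mul_le_mul_of_nonneg_left (mgf_sum_pi_le hM hZ hZM t) (exp_pos _).le)

lemma measureReal_pi_two_mul_le_sum_le (hM : 0 < M) (hZ : AEMeasurable Z μ)
    (hZM : ∀ᵐ x ∂μ, Z x ∈ Icc 0 M) {κ : ℝ} (hκ : Fintype.card ι * μ[Z] ≤ κ) :
    (Measure.pi fun _ : ι => μ).real {x | 2 * κ ≤ ∑ i, Z (x i)}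
      ≤ exp (-((2 * Real.log 2 - 1) * κ / M)) := by
  refine (measureReal_pi_le_sum_le hM hZ hZM (t := Real.log 2 / M) (by positivity) _).trans ?_
  rw [div_mul_cancel₀ _ hM.ne', exp_log two_pos, exp_le_exp]
  field_simp
  linarith

lemma measureReal_pi_sum_le_sub_le (hM : 0 < M) (hZ : AEMeasurable Z μ)
    (hZM : ∀ᵐ x ∂μ, Z x ∈ Icc 0 M) {κ η : ℝ} (hκ : 0 < κ) (hη : 0 ≤ η) (hηκ : η ≤ 2 * κ)
    (hκZ : κ ≤ Fintype.card ι * μ[Z]) :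
    (Measure.pi fun _ : ι => μ).real {x | ∑ i, Z (x i) ≤ κ - η}
      ≤ exp (-(η ^ 2 / (2 * κ * M))) := by
  set s := η / κ
  have hs : 0 ≤ s := by positivity
  have hs2 : s ≤ 2 := (div_le_iff₀ hκ).2 hηκ
  refine (measureReal_pi_sum_le_le hM hZ hZM (t := -s / M)
    (div_nonpos_of_nonpos_of_nonneg (neg_nonpos.2 hs) hM.le) _).trans ?_
  rw [div_mul_cancel₀ _ hM.ne', exp_le_exp]
  have hexp : exp (-s) - 1 ≤ -s + s ^ 2 / 2 := by
    linarith [exp_neg_le_one_sub_add_sq_div_two hs]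
  have hmean : (exp (-s) - 1) * (Fintype.card ι * μ[Z]) ≤ (-s + s ^ 2 / 2) * κ :=
    calc (exp (-s) - 1) * (Fintype.card ι * μ[Z])
        ≤ (-s + s ^ 2 / 2) * (Fintype.card ι * μ[Z]) := by
          gcongr
          exact hκ.le.trans hκZ
      _ ≤ (-s + s ^ 2 / 2) * κ := mul_le_mul_of_nonpos_left hκZ (by nlinarith)
  have hsκ : s * κ = η := div_mul_cancel₀ η hκ.ne'
  have hlin : s * (κ - η) = η - s * η := by rw [mul_sub, hsκ]
  have hquad : (-s + s ^ 2 / 2) * κ = -η + s * η / 2 := by rw [← hsκ]; ring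
  calc -(-s / M) * (κ - η) + Fintype.card ι * ((exp (-s) - 1) * μ[Z] / M)
      = (s * (κ - η) + (exp (-s) - 1) * (Fintype.card ι * μ[Z])) / M := by ring
    _ ≤ (-(s * η) / 2) / M := by gcongr; linarith
    _ = -(η ^ 2 / (2 * κ * M)) := by simp only [s]; field_simp

end Chernoff

lemma ofReal_one_sub_sub_le_measure {Ω : Type*} [MeasurableSpace Ω] {ν : Measure Ω}
    [IsProbabilityMeasure ν] {A B S : Set Ω} {p q : ℝ} (hS : (A ∪ B)ᶜ ⊆ S)
    (hA : ν.real A ≤ p) (hB : ν.real B ≤ q) : ENNReal.ofReal (1 - p - q) ≤ ν S := by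
  have h : 1 ≤ ν.real A + ν.real B + ν.real S := by
    calc 1 = ν.real univ := probReal_univ.symm
      _ ≤ ν.real (A ∪ B ∪ S) := measureReal_mono fun x _ => by
          by_cases hx : x ∈ A ∪ B
          · exact Or.inl hx
          · exact Or.inr (hS hx)
      _ ≤ ν.real (A ∪ B) + ν.real S := measureReal_union_le _ _
      _ ≤ ν.real A + ν.real B + ν.real S := by gcongr; exact measureReal_union_le _ _
  rw [← ofReal_measureReal]
  exact ENNReal.ofReal_le_ofReal (by linarith)

lemma dist2_sq {X : Type*} [MeasurableSpace X] (μ : Measure X) (f g : X → ℝ) :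
    dist2 μ f g ^ 2 = ∫ x, (f x - g x) ^ 2 ∂μ :=
  sq_sqrt (integral_nonneg fun _ => sq_nonneg _)

lemma natCast_mul_empDist2_sq {X : Type*} {n : ℕ} (hn : n ≠ 0) (x : Fin n → X) (f g : X → ℝ) :
    (n : ℝ) * empDist2 x f g ^ 2 = ∑ i, (f (x i) - g (x i)) ^ 2 := by
  rw [empDist2, sq_sqrt (by positivity)]
  field_simp

theorem empirical_concentration_bounded_general
    {X : Type*} [MeasurableSpace X] (μ : Measure X) [IsProbabilityMeasure μ] (n : ℕ)
    (F : Set (X → ℝ)) (hFmeas : ∀ f ∈ F, Measurable f)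
    (B : ℝ) (hB : 0 < B) (hbd : ∀ f ∈ F, ∀ x, |f x| ≤ B) :
    ∃ C₀ : ℝ, 0 < C₀ ∧ ∀ C : ℝ, C₀ ≤ C → ∀ δ : ℝ, 0 < δ →
      ∀ f ∈ F, ∀ g ∈ F, ∀ fbar ∈ F,
      C ^ 2 * δ ^ 2 ≤ (n : ℝ) * (dist2 μ f g) ^ 2 →
      (n : ℝ) * (dist2 μ f fbar) ^ 2 < δ ^ 2 →
      ENNReal.ofReal (1 - Real.exp (-(3 * δ ^ 2) / (64 * B ^ 2))
            - Real.exp (-(3 * δ ^ 2) / (16 * B ^ 2 * (3 * C ^ 2 + 1))))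
        ≤ (Measure.pi fun _ : Fin n => μ)
            {x | (n : ℝ) * (empDist2 x f fbar) ^ 2 ≤ 2 * δ ^ 2 ∧
                 (C ^ 2 - 1) * δ ^ 2 ≤ (n : ℝ) * (empDist2 x f g) ^ 2} := by
  refine ⟨1, one_pos, fun C hC δ hδ f hf g hg fbar hfbar hfar hnear => ?_⟩
  rw [dist2_sq] at hfar hnear
  have hC2 : 1 ≤ C ^ 2 := by nlinarith
  have hn : n ≠ 0 := by
    rintro rfl
    simp only [CharP.cast_eq_zero, zero_mul] at hfar
    nlinarith [pow_pos hδ 2]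
  have hsq : ∀ p ∈ F, ∀ q ∈ F, ∀ᵐ x ∂μ, (p x - q x) ^ 2 ∈ Icc 0 (4 * B ^ 2) :=
    fun p hp q hq => .of_forall fun x => ⟨sq_nonneg _, by
      have := abs_sub (p x) (q x)
      nlinarith [abs_nonneg (p x - q x), sq_abs (p x - q x), hbd p hp x, hbd q hq x]⟩
  have hmeas : ∀ p ∈ F, ∀ q ∈ F, AEMeasurable (fun x => (p x - q x) ^ 2) μ :=
    fun p hp q hq => ((hFmeas p hp).sub (hFmeas q hq)).pow_const 2 |>.aemeasurable
  have hnear' := measureReal_pi_two_mul_le_sum_le (ι := Fin n) (by positivity)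
    (hmeas f hf fbar hfbar) (hsq f hf fbar hfbar) (κ := δ ^ 2)
    (by rw [Fintype.card_fin]; exact hnear.le)
  have hfar' := measureReal_pi_sum_le_sub_le (ι := Fin n) (by positivity)
    (hmeas f hf g hg) (hsq f hf g hg) (κ := C ^ 2 * δ ^ 2) (η := δ ^ 2) (by positivity)
    (by positivity) (by nlinarith [pow_pos hδ 2]) (by rwa [Fintype.card_fin])
  refine ofReal_one_sub_sub_le_measure ?_ (hnear'.trans ?_) (hfar'.trans ?_)
  · intro x hx
    simp only [compl_union, mem_inter_iff, mem_compl_iff, mem_ofPred_eq, not_le] at hx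
    simp only [mem_ofPred_eq, natCast_mul_empDist2_sq hn]
    exact ⟨hx.1.le, by linarith [hx.2]⟩
  · rw [exp_le_exp, neg_div, neg_le_neg_iff, div_le_div_iff₀ (by positivity) (by positivity)]
    nlinarith [Real.log_two_gt_d9, mul_pos (pow_pos hδ 2) (pow_pos hB 2)]
  · rw [exp_le_exp, neg_div, neg_le_neg_iff, div_le_div_iff₀ (by positivity) (by positivity)]
    have hδB : 0 < (δ ^ 2) ^ 2 * B ^ 2 := by positivity
    nlinarith [mul_nonneg hδB.le (sq_nonneg C)]

/-- **Empirical-to-population norm concentration, bounded case** (Lemma 2.4).  If all functions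
in `F` are bounded by `B` in sup-norm, `n‖f − g‖²_{L2(P_X)} ≥ C²δ²` for a sufficiently large
`C > 0`, and `n‖f − f̄‖²_{L2(P_X)} < δ²`, then with probability at least
`1 − exp(−3δ²/(64B²)) − exp(−3δ²/(16B²(3C²+1)))` (over the i.i.d. design `X_1,…,X_n ~ μ`) both
`n‖f − f̄‖²_{L2(P_n)} ≤ 2δ²` and `n‖f − g‖²_{L2(P_n)} ≥ (C² − 1)δ²` hold simultaneously. -/
theorem empirical_concentration_bounded
    {X : Type*} [MeasurableSpace X] (μ : Measure X) [IsProbabilityMeasure μ] (n : ℕ)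
    (F : Set (X → ℝ)) (hFconv : Convex ℝ F) (hFmeas : ∀ f ∈ F, Measurable f)
    (B : ℝ) (hB : 0 < B) (hbd : ∀ f ∈ F, ∀ x, |f x| ≤ B) :
    ∃ C₀ : ℝ, 0 < C₀ ∧ ∀ C : ℝ, C₀ ≤ C → ∀ δ : ℝ, 0 < δ →
      ∀ f ∈ F, ∀ g ∈ F, ∀ fbar ∈ F,
      C ^ 2 * δ ^ 2 ≤ (n : ℝ) * (dist2 μ f g) ^ 2 →
      (n : ℝ) * (dist2 μ f fbar) ^ 2 < δ ^ 2 →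
      ENNReal.ofReal (1 - Real.exp (-(3 * δ ^ 2) / (64 * B ^ 2))
            - Real.exp (-(3 * δ ^ 2) / (16 * B ^ 2 * (3 * C ^ 2 + 1))))
        ≤ (Measure.pi fun _ : Fin n => μ)
            {x | (n : ℝ) * (empDist2 x f fbar) ^ 2 ≤ 2 * δ ^ 2 ∧
                 (C ^ 2 - 1) * δ ^ 2 ≤ (n : ℝ) * (empDist2 x f g) ^ 2} :=
  empirical_concentration_bounded_general μ n F hFmeas B hB hbd

end
end

section
/- Monotonicity of local metric entropy: For a convex class F ⊆ L2(P_X) and any constant c > 0, the map ε ↦ M^loc_F(ε, c) is monotone non-increasing in ε. -/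
open MeasureTheory ProbabilityTheory ENNReal

noncomputable section

/-- **Monotonicity of the local metric entropy** (Lemma 2.7).  For a convex class `F` and any
`c > 0`, the map `ε ↦ M^loc_F(ε, c)` is monotone non-increasing. -/
theorem Mloc_antitone
    {X : Type*} [MeasurableSpace X] (μ : Measure X)
    (F : Set (X → ℝ)) (hFconv : Convex ℝ F) (c : ℝ) (hc : 0 < c) :
    ∀ ε₁ ε₂ : ℝ, 0 < ε₁ → ε₁ ≤ ε₂ → Mloc μ F ε₂ c ≤ Mloc μ F ε₁ c := by
  classical
  intro ε₁ ε₂ hε₁ hle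
  have hε₂ : 0 < ε₂ := lt_of_lt_of_le hε₁ hle
  set l : ℝ := ε₁ / ε₂ with hl
  have hl0 : 0 < l := div_pos hε₁ hε₂
  have hl1 : l ≤ 1 := (div_le_one hε₂).mpr hle
  have hlε : l * ε₂ = ε₁ := div_mul_cancel₀ ε₁ hε₂.ne'
  have hlεc : l * (ε₂ / c) = ε₁ / c := by
    rw [hl]; field_simp
  refine iSup₂_le fun f hf => ?_
  refine le_trans ?_ (le_iSup₂ (f := fun f (_ : f ∈ F) =>
    packNum μ (ε₁ / c) ({g | dist2 μ f g ≤ ε₁} ∩ F)) f hf)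
  -- define the contraction map
  set φ : (X → ℝ) → (X → ℝ) := fun g x => (1 - l) * f x + l * g x with hφ
  have hφf : φ f = f := by
    funext x; simp [hφ]; ring
  have hdist : ∀ g h : X → ℝ, dist2 μ (φ g) (φ h) = l * dist2 μ g h := by
    intro g h
    unfold dist2
    have h1 : ∀ x, (φ g x - φ h x) ^ 2 = l ^ 2 * (g x - h x) ^ 2 := by
      intro x; simp only [hφ]; ring
    simp only [h1]
    rw [MeasureTheory.integral_const_mul, Real.sqrt_mul (sq_nonneg l),
      Real.sqrt_sq hl0.le]
  have hinj : Function.Injective φ := by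
    intro g h hgh
    funext x
    have := congrFun hgh x
    simp only [hφ] at this
    have : l * g x = l * h x := by linarith
    exact mul_left_cancel₀ hl0.ne' this
  rw [packNum, packNum]
  refine iSup₂_le fun T hT => ?_
  obtain ⟨hTsub, hTpack⟩ := hT
  refine le_trans ?_ (le_iSup₂ (T.image φ) ?_)
  · rw [Finset.card_image_of_injective _ hinj]
  · constructor
    · intro g hg
      simp only [Finset.coe_image, Set.mem_image, Finset.mem_coe] at hg
      obtain ⟨h, hh, rfl⟩ := hg
      obtain ⟨hhd, hhF⟩ := hTsub hh
      constructor
      · show dist2 μ f (φ h) ≤ ε₁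
        calc dist2 μ f (φ h) = l * dist2 μ f h := by rw [← hφf, hdist, hφf]
          _ ≤ l * ε₂ := by
              exact mul_le_mul_of_nonneg_left hhd hl0.le
          _ = ε₁ := hlε
      · have hmem := hFconv hf hhF (by linarith : (0:ℝ) ≤ 1 - l) hl0.le (by ring)
        have heq : (1 - l) • f + l • h = φ h := by
          funext x; simp [hφ, smul_eq_mul]
        rwa [heq] at hmem
    · intro a ha b hb hab
      simp only [Finset.mem_image] at ha hb
      obtain ⟨g, hg, rfl⟩ := ha
      obtain ⟨h, hh, rfl⟩ := hb
      have hgh : g ≠ h := fun e => hab (by rw [e])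
      have := hTpack g hg h hh hgh
      calc ε₁ / c = l * (ε₂ / c) := hlεc.symm
        _ < l * dist2 μ g h := by exact mul_lt_mul_of_pos_left this hl0
        _ = dist2 μ (φ g) (φ h) := (hdist g h).symm

end
end
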